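/- For every (x, y, d) ∈ ℝ³ with x, y ≥ 0 and xy ≥ |d|, one has A(x,y,d) ≥ 0 and g(x,y,d) ≥ 0; equivalently, 2√(A(x,y,d)) ≤ x² + y² + L. -/
import Mathlib


noncomputable section

def Afun (l x y d : ℝ) : ℝ :=
  (x ^ 2 + y ^ 2) * (l ^ 2 + 1 / l ^ 2) / 2
    + (l ^ 2 - 1 / l ^ 2) * Real.sqrt (x ^ 2 * y ^ 2 - d ^ 2) + 2 * d

def gfun (l x y d : ℝ) : ℝ :=
  x ^ 2 + y ^ 2 + (l ^ 2 + 1 / l ^ 2) - 2 * Real.sqrt (Afun l x y d)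

/-- For every `(x, y, d) ∈ ℝ³` with `x, y ≥ 0` and `xy ≥ |d|`, one has
`A(x,y,d) ≥ 0` and `g(x,y,d) ≥ 0`; equivalently `2√(A(x,y,d)) ≤ x² + y² + L`. -/
theorem A_nonneg_and_g_nonneg (l : ℝ) (hl : 1 < l) (x y d : ℝ)
    (hx : 0 ≤ x) (hy : 0 ≤ y) (hd : |d| ≤ x * y) :
    0 ≤ Afun l x y d ∧ 0 ≤ gfun l x y d ∧
      2 * Real.sqrt (Afun l x y d) ≤ x ^ 2 + y ^ 2 + (l ^ 2 + 1 / l ^ 2) := by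
  have hl0 : (0:ℝ) < l := lt_trans one_pos hl
  have hl2 : (1:ℝ) < l ^ 2 := by nlinarith
  have hinv : l ^ 2 * (1 / l ^ 2) = 1 := by field_simp
  have hinv0 : (0:ℝ) < 1 / l ^ 2 := by positivity
  have hL : (2:ℝ) ≤ l ^ 2 + 1 / l ^ 2 := by nlinarith [sq_nonneg (l ^ 2 - 1)]
  have hM : (0:ℝ) ≤ l ^ 2 - 1 / l ^ 2 := by nlinarith
  have hdn : d ^ 2 ≤ x ^ 2 * y ^ 2 := by
    nlinarith [sq_abs d, abs_nonneg d, mul_nonneg hx hy]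
  set s := Real.sqrt (x ^ 2 * y ^ 2 - d ^ 2) with hs_def
  have hs0 : 0 ≤ s := Real.sqrt_nonneg _
  have hs : s ^ 2 = x ^ 2 * y ^ 2 - d ^ 2 := Real.sq_sqrt (by linarith)
  have hnegd : -d ≤ x * y := by
    have := neg_abs_le d; linarith
  have hA : 0 ≤ Afun l x y d := by
    unfold Afun
    rw [← hs_def]
    nlinarith [mul_nonneg hM hs0, sq_nonneg (x - y),
      mul_nonneg (by nlinarith [sq_nonneg (x - y)] : (0:ℝ) ≤ x ^ 2 + y ^ 2)
        (by linarith : (0:ℝ) ≤ l ^ 2 + 1 / l ^ 2 - 2)]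
  have key : Afun l x y d ≤ ((x ^ 2 + y ^ 2 + (l ^ 2 + 1 / l ^ 2)) / 2) ^ 2 := by
    unfold Afun
    rw [← hs_def]
    nlinarith [sq_nonneg (2 * s - (l ^ 2 - 1 / l ^ 2)), sq_nonneg (2 * d - 2),
      sq_nonneg (x ^ 2 - y ^ 2), hs, hinv]
  have hsqrt : Real.sqrt (Afun l x y d) ≤ (x ^ 2 + y ^ 2 + (l ^ 2 + 1 / l ^ 2)) / 2 := by
    calc Real.sqrt (Afun l x y d)
        ≤ Real.sqrt (((x ^ 2 + y ^ 2 + (l ^ 2 + 1 / l ^ 2)) / 2) ^ 2) :=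
          Real.sqrt_le_sqrt key
      _ = (x ^ 2 + y ^ 2 + (l ^ 2 + 1 / l ^ 2)) / 2 := Real.sqrt_sq (by positivity)
  refine ⟨hA, ?_, by linarith⟩
  unfold gfun
  linarith

end
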